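/- Let A be a strictly unital A∞-algebra over a field k (for example a unital dg algebra) such that H^i A = 0 for all i < 0 and H^0 A = k. Then there exists a subalgebra B ⊆ A whose inclusion is a quasi-isomorphism and which is augmented. -/

import Mathlib

/-!
Core definitions: A∞-algebras over a field `k`, following Keller,
"Introduction to A-infinity algebras and modules".

A graded vector space is a vector space `V` with a direct-sum decomposition
`grading : ℤ → Submodule k V`.  The operations `m n : V^{⊗n} → V` are encoded
as multilinear maps, and all the defining identities are stated elementwise on
homogeneous tuples, with the Koszul signs written out explicitly.
-/

namespace AInfty

variable {k : Type} [Field k]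
variable {V W U : Type} [AddCommGroup V] [Module k V] [AddCommGroup W] [Module k W]
  [AddCommGroup U] [Module k U]

/-- A bundled graded `k`-vector space carrier. -/
structure GModule (k : Type) [Field k] : Type 1 where
  carrier : Type
  [acg : AddCommGroup carrier]
  [mod : Module k carrier]

attribute [instance] GModule.acg GModule.mod

instance : CoeSort (GModule k) Type := ⟨GModule.carrier⟩

/-- The tuple `(a 0, …, a (r-1), z, a (r+s), …)` obtained from `a` by replacing the
`s` entries starting at slot `r` by the single entry `z`.  This is the argument of
the outer operation in the term of the A∞-identity indexed by `(r,s)`. -/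
def spliced (r s : ℕ) (z : V) (a : ℕ → V) : ℕ → V :=
  fun i => if i < r then a i else if i = r then z else a (i + s - 1)

/-- The sign `(-1)^{r + st + s(d 0 + ⋯ + d (r-1))}` of the term
`m_u (1^{⊗r} ⊗ m_s ⊗ 1^{⊗t})` in the A∞-identity with `n = r+s+t` arguments of
degrees `d`; the summand `s·(d 0 + ⋯ + d (r-1))` is the Koszul sign coming from
moving `m_s` (of degree `2-s ≡ s`) past the first `r` arguments. -/
def inSign (n r s : ℕ) (d : ℕ → ℤ) : ℤ :=
  ((r : ℤ) + (s : ℤ) * ((n : ℤ) - (r : ℤ) - (s : ℤ))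
    + (s : ℤ) * ∑ i ∈ Finset.range r, d i).negOnePow

/-- An A∞-algebra structure on the `k`-vector space `V`:
a ℤ-grading (with a direct sum decomposition), operations `m n : V^{⊗n} → V`
(`n ≥ 1`) of degree `2 - n`, satisfying the A∞-identities
`∑ (-1)^{r+st} m_u (1^{⊗r} ⊗ m_s ⊗ 1^{⊗t}) = 0` (stated elementwise on
homogeneous arguments, with the Koszul sign rule). -/
structure Alg (k V : Type) [Field k] [AddCommGroup V] [Module k V] : Type 1 where
  grading : ℤ → Submodule k V
  decomp : DirectSum.Decomposition grading
  m : ∀ n : ℕ, MultilinearMap k (fun _ : Fin n => V) V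
  m_zero : m 0 = 0
  m_graded : ∀ (n : ℕ) (d : Fin n → ℤ) (a : Fin n → V),
    (∀ i, a i ∈ grading (d i)) → m n a ∈ grading ((∑ i, d i) + 2 - n)
  m_rel : ∀ n : ℕ, 1 ≤ n → ∀ (d : ℕ → ℤ) (a : ℕ → V), (∀ i, a i ∈ grading (d i)) →
    (∑ r ∈ Finset.range n, ∑ s ∈ Finset.Icc 1 (n - r),
      inSign n r s d •
        m (n - s + 1) (fun i : Fin (n - s + 1) =>
          spliced r s (m s fun j : Fin s => a (r + (j : ℕ))) a (i : ℕ))) = 0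

/-- The differential `m₁` of an A∞-algebra, as a plain function. -/
def Alg.d (A : Alg k V) : V → V := fun x => A.m 1 fun _ => x

/-- The sign of the term of a composition-indexed sum
`∑_c ± m_{c.length} (f_{i_1} ⊗ ⋯ ⊗ f_{i_r})`: the structural sign
`(-1)^{∑_q (r-1-q)(i_q - 1)}` together with the Koszul sign obtained from moving
`f_{i_q}` (of degree `1 - i_q`) past the arguments of the earlier blocks. -/
def cSign {n : ℕ} (c : Composition n) (d : ℕ → ℤ) : ℤ :=
  ((∑ q : Fin c.length, ((c.length : ℤ) - 1 - (q : ℕ)) * ((c.blocksFun q : ℤ) - 1))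
    + ∑ q : Fin c.length,
        (1 - (c.blocksFun q : ℤ)) * ∑ i ∈ Finset.range (c.sizeUpTo (q : ℕ)), d i).negOnePow

/-- A morphism of A∞-algebras `f : A → B`: a family of multilinear maps
`f n : V^{⊗n} → W` (`n ≥ 1`) of degree `1 - n` satisfying
`∑ (-1)^{r+st} f_u (1^{⊗r} ⊗ m_s ⊗ 1^{⊗t}) = ∑ (-1)^s m_r (f_{i_1} ⊗ ⋯ ⊗ f_{i_r})`
(elementwise, Koszul signs included; the right-hand sum runs over all
compositions of `n`). -/
structure Hom (A : Alg k V) (B : Alg k W) : Type 1 where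
  f : ∀ n : ℕ, MultilinearMap k (fun _ : Fin n => V) W
  f_zero : f 0 = 0
  f_graded : ∀ (n : ℕ) (d : Fin n → ℤ) (a : Fin n → V),
    (∀ i, a i ∈ A.grading (d i)) → f n a ∈ B.grading ((∑ i, d i) + 1 - n)
  f_rel : ∀ n : ℕ, 1 ≤ n → ∀ (d : ℕ → ℤ) (a : ℕ → V), (∀ i, a i ∈ A.grading (d i)) →
    (∑ r ∈ Finset.range n, ∑ s ∈ Finset.Icc 1 (n - r),
      inSign n r s d •
        f (n - s + 1) (fun i : Fin (n - s + 1) =>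
          spliced r s (A.m s fun j : Fin s => a (r + (j : ℕ))) a (i : ℕ)))
    = ∑ c : Composition n, cSign c d •
        B.m c.length (fun q : Fin c.length =>
          f (c.blocksFun q) (fun j : Fin (c.blocksFun q) => a (c.sizeUpTo (q : ℕ) + (j : ℕ))))

/-- The first component of a morphism, as a plain function. -/
def Hom.one {A : Alg k V} {B : Alg k W} (f : Hom A B) : V → W :=
  fun x => f.f 1 fun _ => x

/-- `f` is a quasi-isomorphism: its first component induces an isomorphism on
the homology of the complexes `(V, m₁)`, `(W, m₁)` (surjectivity and
injectivity on homology, stated elementwise). -/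
def Hom.IsQuasiIso {A : Alg k V} {B : Alg k W} (f : Hom A B) : Prop :=
  (∀ y : W, B.d y = 0 → ∃ x : V, A.d x = 0 ∧ ∃ z : W, f.one x - y = B.d z) ∧
  (∀ x : V, A.d x = 0 → (∃ z : W, f.one x = B.d z) → ∃ w : V, x = A.d w)

/-- The value on a homogeneous tuple (of degrees `d`) of the `n`-th component of
the composite `g ∘ f` of two A∞-morphisms:
`(g ∘ f)_n = ∑ (-1)^s g_r (f_{i_1} ⊗ ⋯ ⊗ f_{i_r})` (Koszul signs included). -/
def compEval {A : Alg k V} {B : Alg k W} {C : Alg k U}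
    (f : Hom A B) (g : Hom B C) (n : ℕ) (d : ℕ → ℤ) (a : ℕ → V) : U :=
  ∑ c : Composition n, cSign c d •
    g.f c.length (fun q : Fin c.length =>
      f.f (c.blocksFun q) (fun j : Fin (c.blocksFun q) => a (c.sizeUpTo (q : ℕ) + (j : ℕ))))

/-- The component family of the identity morphism, evaluated on a tuple. -/
def idEval (n : ℕ) (a : ℕ → V) : V := if n = 1 then a 0 else 0

/-- `f` is an isomorphism of A∞-algebras: it has a two-sided inverse under
composition of A∞-morphisms (composites evaluated on homogeneous tuples). -/
def Hom.IsIso {A : Alg k V} {B : Alg k W} (f : Hom A B) : Prop :=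
  ∃ g : Hom B A,
    (∀ n : ℕ, 1 ≤ n → ∀ (d : ℕ → ℤ) (a : ℕ → V), (∀ i, a i ∈ A.grading (d i)) →
      compEval f g n d a = idEval n a) ∧
    (∀ n : ℕ, 1 ≤ n → ∀ (d : ℕ → ℤ) (a : ℕ → W), (∀ i, a i ∈ B.grading (d i)) →
      compEval g f n d a = idEval n a)


/-- The data of a homotopy between A∞-morphisms: a family of multilinear maps
`h n : V^{⊗n} → W` of degree `-n` (component form of a degree `-1` map
`T̄SA → T̄SB` with `ΔH = F ⊗ H + H ⊗ G`). -/
structure HtpyData (A : Alg k V) (B : Alg k W) : Type 1 where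
  h : ∀ n : ℕ, MultilinearMap k (fun _ : Fin n => V) W
  h_zero : h 0 = 0
  h_graded : ∀ (n : ℕ) (d : Fin n → ℤ) (a : Fin n → V),
    (∀ i, a i ∈ A.grading (d i)) → h n a ∈ B.grading ((∑ i, d i) - n)

/-- Component families of (composites of) A∞-morphisms `A → B`, recorded by their
values on homogeneous tuples (arguments: arity, degrees of the entries, entries). -/
abbrev EvalFamily (k : Type) [Field k] (V W : Type) [AddCommGroup V] [Module k V]
    [AddCommGroup W] [Module k W] :=
  ℕ → (ℕ → ℤ) → (ℕ → V) → W

/-- The evaluation family of a morphism. -/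
def Hom.eval {A : Alg k V} {B : Alg k W} (f : Hom A B) : EvalFamily k V W :=
  fun n _ a => f.f n fun i : Fin n => a (i : ℕ)

/-- The evaluation family of the identity morphism. -/
def idEvalFam : EvalFamily k V V := fun n _ a => if n = 1 then a 0 else 0

/-- Sign of the term of `∑ m_r (F_{i_1} ⊗ ⋯ ⊗ F_{i_{j-1}} ⊗ H_{i_j} ⊗ G_{i_{j+1}} ⊗ ⋯)`
in the homotopy identity (block `j` carries the homotopy component, of degree
`-i_j`; the other blocks carry morphism components, of degree `1 - i_q`). -/
def hSign {n : ℕ} (c : Composition n) (d : ℕ → ℤ) (j : Fin c.length) : ℤ :=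
  ((∑ q : Fin c.length, ((c.length : ℤ) - 1 - (q : ℕ)) * ((c.blocksFun q : ℤ) - 1))
    + ∑ q : Fin c.length,
        (if q = j then (c.blocksFun q : ℤ) else 1 - (c.blocksFun q : ℤ)) *
          ∑ i ∈ Finset.range (c.sizeUpTo (q : ℕ)), d i).negOnePow

/-- `H` is a homotopy from the morphism family `F` to the morphism family `G`:
the component form (cf. Prouté) of the two conditions `ΔH = F ⊗ H + H ⊗ G` and
`F - G = b ∘ H + H ∘ b` on the bar construction, namely
`F_n - G_n = ∑ ± m_r (F ⊗ ⋯ ⊗ F ⊗ H ⊗ G ⊗ ⋯ ⊗ G) + ∑ ± H_u (1^{⊗r} ⊗ m_s ⊗ 1^{⊗t})`,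
stated elementwise on homogeneous tuples with explicit Koszul signs. -/
def IsHomotopyVia (A : Alg k V) (B : Alg k W)
    (F G : EvalFamily k V W) (H : HtpyData A B) : Prop :=
  ∀ n : ℕ, 1 ≤ n → ∀ (d : ℕ → ℤ) (a : ℕ → V), (∀ i, a i ∈ A.grading (d i)) →
    F n d a - G n d a =
      (∑ c : Composition n, ∑ j : Fin c.length, hSign c d j •
        B.m c.length (fun q : Fin c.length =>
          if (q : ℕ) < (j : ℕ) then
            F (c.blocksFun q) (fun i => d (c.sizeUpTo (q : ℕ) + i))
              (fun i => a (c.sizeUpTo (q : ℕ) + i))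
          else if q = j then
            H.h (c.blocksFun q) (fun i : Fin (c.blocksFun q) => a (c.sizeUpTo (q : ℕ) + (i : ℕ)))
          else
            G (c.blocksFun q) (fun i => d (c.sizeUpTo (q : ℕ) + i))
              (fun i => a (c.sizeUpTo (q : ℕ) + i))))
      + ∑ r ∈ Finset.range n, ∑ s ∈ Finset.Icc 1 (n - r),
          inSign n r s d •
            H.h (n - s + 1) (fun i : Fin (n - s + 1) =>
              spliced r s (A.m s fun j : Fin s => a (r + (j : ℕ))) a (i : ℕ))

/-- Two morphism families are homotopic. -/
def Homotopic (A : Alg k V) (B : Alg k W) (F G : EvalFamily k V W) : Prop :=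
  ∃ H : HtpyData A B, IsHomotopyVia A B F G H


/-- `one` is a strict unit of the A∞-algebra `A`: a degree-0 cycle with
`m₂(1,a) = a = m₂(a,1)`, and `m_n(…,1,…) = 0` for all `n ≥ 3`. -/
structure IsStrictUnit (A : Alg k V) (one : V) : Prop where
  mem : one ∈ A.grading 0
  cycle : A.d one = 0
  left : ∀ a : V, A.m 2 ![one, a] = a
  right : ∀ a : V, A.m 2 ![a, one] = a
  higher : ∀ n : ℕ, 3 ≤ n → ∀ (a : Fin n → V) (i : Fin n), a i = one → A.m n a = 0

end AInfty

open AInfty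

/-!
Choose a complement `S` of `d(A⁰)` in `A¹` and let `B = k·1 ⊕ S ⊕ A^{≥2}`, with augmentation
ideal `K = S ⊕ A^{≥2}`. As `m_n` has degree `2 - n`, it sends `n` elements of degree `≥ 1`
into degree `≥ 2`, so `K` is closed under all operations; the strict unit axioms extend this
to `B`. Since `d` has degree one, it suffices to check that `B ⊆ A` is a quasi-isomorphism on
homogeneous elements, degree by degree: `A` is acyclic in negative degrees,
`H⁰ A = k·[1] = H⁰ B`, the degree-one cycles of `A` are `d(A⁰)` plus the cycles in `S`, and
`d(A¹) = d(S)`.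
-/

open DirectSum Submodule

theorem MultilinearMap.map_mem_of_forall_mem_span {R M N ι : Type*} [CommSemiring R]
    [AddCommMonoid M] [Module R M] [AddCommMonoid N] [Module R N] [Fintype ι]
    (f : MultilinearMap R (fun _ : ι => M) N) {s : Set M} {p : Submodule R N}
    (hs : ∀ a : ι → M, (∀ i, a i ∈ s) → f a ∈ p) (a : ι → M) (ha : ∀ i, a i ∈ span R s) :
    f a ∈ p := by
  classical
  suffices key : ∀ t : Finset ι, ∀ a : ι → M, (∀ i, a i ∈ span R s) → (∀ i ∉ t, a i ∈ s) →
      f a ∈ p from key Finset.univ a ha fun i hi => absurd (Finset.mem_univ i) hi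
  intro t
  induction t using Finset.induction_on with
  | empty => exact fun a _ ha' => hs a fun i => ha' i (Finset.notMem_empty i)
  | @insert j t hj ih =>
    intro a ha hat
    have hspan : span R s ≤ p.comap (f.toLinearMap a j) := by
      refine span_le.mpr fun x hx => ih _ (fun i => ?_) (fun i hi => ?_)
      · rcases eq_or_ne i j with rfl | hij
        · simpa using subset_span hx
        · simpa [hij] using ha i
      · rcases eq_or_ne i j with rfl | hij
        · simpa using hx
        · simpa [hij] using hat i (by simp [hij, hi])
    simpa using hspan (ha j)

section Graded

variable {R M : Type*} [Ring R] [AddCommGroup M] [Module R M]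
  {G : ℤ → Submodule R M} [Decomposition G]

theorem DirectSum.isHomogeneous_span {s : Set M} (hs : ∀ x ∈ s, ∃ i, x ∈ G i) :
    SetLike.IsHomogeneous G (span R s) := by
  intro i x hx
  induction hx using span_induction with
  | mem x hx =>
    obtain ⟨j, hxj⟩ := hs x hx
    rcases eq_or_ne j i with rfl | hji
    · rw [decompose_of_mem_same G hxj]; exact subset_span hx
    · rw [decompose_of_mem_ne G hxj hji]; exact zero_mem _
  | zero => simp
  | add x y _ _ hx hy => simpa using add_mem hx hy
  | smul c x _ hx =>
    rw [decompose_smul, DFinsupp.smul_apply, SetLike.val_smul]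
    exact smul_mem _ c hx

theorem DirectSum.mem_of_mem_sup_span_of_homogeneous {i : ℤ} {P : Submodule R M} (hP : P ≤ G i)
    {s : Set M} (hs : ∀ y ∈ s, ∃ j ≠ i, y ∈ G j) {x : M} (hxi : x ∈ G i)
    (hx : x ∈ P ⊔ span R s) : x ∈ P := by
  obtain ⟨p, hp, q, hq, rfl⟩ := mem_sup.mp hx
  have hspan : span R s ≤ ⨆ j ∈ {j | j ≠ i}, G j := span_le.mpr fun y hy => by
    obtain ⟨j, hji, hyj⟩ := hs y hy
    exact (le_biSup G hji) hyj
  have hdisj : Disjoint (G i) (⨆ j ∈ {j | j ≠ i}, G j) :=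
    (Decomposition.isInternal G).submodule_iSupIndep.disjoint_biSup (by simp)
  have hqi : q ∈ G i := by simpa using sub_mem hxi (hP hp)
  rw [disjoint_def.mp hdisj q hqi (hspan hq), add_zero]
  exact hp

variable (D : M →ₗ[R] M) (hD : ∀ i, ∀ x ∈ G i, D x ∈ G (i + 1))
include hD

theorem DirectSum.decompose_map_of_degree_one (x : M) {i j : ℤ} (hij : i = j + 1) :
    (decompose G (D x) i : M) = D (decompose G x j) := by
  subst hij
  induction x using Decomposition.inductionOn G with
  | zero => simp
  | @homogeneous l x =>
    rcases eq_or_ne l j with rfl | hlj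
    · rw [decompose_of_mem_same G (hD _ x x.2), decompose_of_mem_same G x.2]
    · rw [decompose_of_mem_ne G (hD l x x.2) (by omega), decompose_of_mem_ne G x.2 hlj, map_zero]
  | add x y hx hy => simp [hx, hy]

theorem DirectSum.map_decompose_eq_zero_of_map_eq_zero {y : M} (hy : D y = 0) (i : ℤ) :
    D (decompose G y i) = 0 := by
  simpa [hy] using (decompose_map_of_degree_one D hD y rfl).symm

theorem DirectSum.exists_homologous_of_forall_homogeneous {B : Submodule R M}
    (h : ∀ i, ∀ y ∈ G i, D y = 0 → ∃ x ∈ B, D x = 0 ∧ ∃ z, x - y = D z)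
    {y : M} (hy : D y = 0) : ∃ x ∈ B, D x = 0 ∧ ∃ z, x - y = D z := by
  classical
  choose x hxB hxD z hz using fun i =>
    h i _ (decompose G y i).2 (map_decompose_eq_zero_of_map_eq_zero D hD hy i)
  refine ⟨∑ i ∈ (decompose G y).support, x i, sum_mem fun i _ => hxB i, by simp [hxD],
    ∑ i ∈ (decompose G y).support, z i, ?_⟩
  calc ∑ i ∈ (decompose G y).support, x i - y
      = ∑ i ∈ (decompose G y).support, (x i - decompose G y i) := by
        rw [Finset.sum_sub_distrib, sum_support_decompose]
    _ = D (∑ i ∈ (decompose G y).support, z i) := by simp [hz]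

theorem DirectSum.exists_primitive_of_forall_homogeneous {B : Submodule R M}
    (hB : SetLike.IsHomogeneous G B)
    (h : ∀ i, ∀ x ∈ B, x ∈ G i → ∀ z ∈ G (i - 1), x = D z → ∃ w ∈ B, x = D w)
    {x : M} (hx : x ∈ B) {z : M} (hxz : x = D z) : ∃ w ∈ B, x = D w := by
  classical
  choose w hwB hw using fun i => h i _ (hB i hx) (decompose G x i).2 _ (decompose G z (i - 1)).2
    (by rw [hxz, decompose_map_of_degree_one D hD z (sub_add_cancel i 1).symm])
  refine ⟨∑ i ∈ (decompose G x).support, w i, sum_mem fun i _ => hwB i, ?_⟩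
  calc x = ∑ i ∈ (decompose G x).support, (decompose G x i : M) :=
        (sum_support_decompose G x).symm
    _ = D (∑ i ∈ (decompose G x).support, w i) := by simp [← hw]

end Graded

namespace AInfty

variable {k V : Type} [Field k] [AddCommGroup V] [Module k V]

instance Alg.decomposition (A : Alg k V) : Decomposition A.grading := A.decomp

def Alg.dLinear (A : Alg k V) : V →ₗ[k] V :=
  (MultilinearMap.ofSubsingleton k V V (0 : Fin 1)).symm (A.m 1)

theorem Alg.dLinear_apply (A : Alg k V) (x : V) : A.dLinear x = A.d x := rfl

theorem Alg.d_mem_grading (A : Alg k V) {i : ℤ} {x : V} (hx : x ∈ A.grading i) :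
    A.d x ∈ A.grading (i + 1) := by
  have h := A.m_graded 1 (fun _ => i) (fun _ => x) (fun _ => hx)
  show A.m 1 (fun _ => x) ∈ _
  convert h using 2
  simp only [Finset.univ_unique, Finset.sum_singleton, Nat.cast_one]
  ring

theorem Alg.d_d_of_mem_grading (A : Alg k V) {i : ℤ} {x : V} (hx : x ∈ A.grading i) :
    A.d (A.d x) = 0 := by
  have h := A.m_rel 1 le_rfl (fun _ => i) (fun _ => x) (fun _ => hx)
  simpa [inSign, spliced, Alg.d, Fin.eq_zero] using h

theorem Alg.exists_two_le_m_mem_grading (A : Alg k V) {n : ℕ} {b : Fin n → V} {d : Fin n → ℤ}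
    (hb : ∀ i, b i ∈ A.grading (d i)) (hd : ∀ i, 1 ≤ d i) :
    ∃ j, 2 ≤ j ∧ A.m n b ∈ A.grading j := by
  refine ⟨_, ?_, A.m_graded n d b hb⟩
  have := Finset.sum_le_sum fun i (_ : i ∈ Finset.univ) => hd i
  simp only [Finset.sum_const, Finset.card_univ, Fintype.card_fin, nsmul_eq_mul,
    mul_one] at this
  omega

theorem IsStrictUnit.m_mem {A : Alg k V} {one : V} (h : IsStrictUnit A one)
    {p : Submodule k V} {n : ℕ} {b : Fin n → V} (hb : ∀ i, b i ∈ p) {j : Fin n}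
    (hj : b j = one) : A.m n b ∈ p := by
  match n, b, j, hj, hb with
  | 1, b, j, hj, _ =>
    have hb1 : b = fun _ => one := funext fun i => by rw [Subsingleton.elim i j, hj]
    subst hb1
    rw [show A.m 1 (fun _ => one) = 0 from h.cycle]
    exact p.zero_mem
  | 2, b, j, hj, hb =>
    have hb2 : b = ![b 0, b 1] := by ext i; fin_cases i <;> rfl
    fin_cases j
    · rw [hb2, show b 0 = one from hj, h.left]; exact hb 1
    · rw [hb2, show b 1 = one from hj, h.right]; exact hb 0
  | n + 3, b, j, hj, _ => rw [h.higher _ (by omega) b j hj]; exact p.zero_mem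

section Truncation

variable (G : ℤ → Submodule k V) (one : V) (S : Submodule k V)

def truncationGenerators : Set V := S ∪ {x | ∃ i, 2 ≤ i ∧ x ∈ G i}

def truncationIdeal : Submodule k V := span k (truncationGenerators G S)

def truncation : Submodule k V := span k (insert one (truncationGenerators G S))

variable {G one S}

theorem one_mem_truncation : one ∈ truncation G one S :=
  subset_span (Set.mem_insert _ _)

theorem mem_truncation_of_mem {x : V} (hx : x ∈ S) : x ∈ truncation G one S :=
  subset_span (Set.mem_insert_of_mem _ (Or.inl hx))

theorem mem_truncation_of_two_le {i : ℤ} (hi : 2 ≤ i) {x : V} (hx : x ∈ G i) :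
    x ∈ truncation G one S :=
  subset_span (Set.mem_insert_of_mem _ (Or.inr ⟨i, hi, hx⟩))

theorem span_singleton_sup_truncationIdeal :
    span k {one} ⊔ truncationIdeal G S = truncation G one S :=
  (span_insert _ _).symm

theorem truncationIdeal_le_truncation : truncationIdeal G S ≤ truncation G one S :=
  span_mono (Set.subset_insert _ _)

theorem exists_one_le_mem_of_mem_truncationGenerators (hS : S ≤ G 1) {x : V}
    (hx : x ∈ truncationGenerators G S) : ∃ i, 1 ≤ i ∧ x ∈ G i := by
  rcases hx with hx | ⟨i, hi, hx⟩
  · exact ⟨1, le_rfl, hS hx⟩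
  · exact ⟨i, by omega, hx⟩

variable [Decomposition G]

theorem isHomogeneous_truncationIdeal (hS : S ≤ G 1) :
    SetLike.IsHomogeneous G (truncationIdeal G S) :=
  isHomogeneous_span fun _ hx =>
    (exists_one_le_mem_of_mem_truncationGenerators hS hx).imp fun _ => And.right

theorem isHomogeneous_truncation (hone : one ∈ G 0) (hS : S ≤ G 1) :
    SetLike.IsHomogeneous G (truncation G one S) := by
  refine isHomogeneous_span fun x hx => ?_
  rcases hx with rfl | hx
  · exact ⟨0, hone⟩
  · exact (exists_one_le_mem_of_mem_truncationGenerators hS hx).imp fun _ => And.right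

theorem disjoint_span_singleton_truncationIdeal (hone : one ∈ G 0) (hS : S ≤ G 1) :
    Disjoint (span k {one}) (truncationIdeal G S) := by
  refine disjoint_def.mpr fun x hx hxK => ?_
  have hx0 : x ∈ G 0 := (span_singleton_le_iff_mem _ _).mpr hone hx
  refine (mem_bot k).mp (mem_of_mem_sup_span_of_homogeneous bot_le (fun y hy => ?_) hx0
    (by rwa [bot_sup_eq]))
  obtain ⟨j, hj, hyj⟩ := exists_one_le_mem_of_mem_truncationGenerators hS hy
  exact ⟨j, by omega, hyj⟩

theorem eq_zero_of_mem_truncation_of_neg (hone : one ∈ G 0) (hS : S ≤ G 1) {i : ℤ} (hi : i < 0)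
    {x : V} (hxB : x ∈ truncation G one S) (hx : x ∈ G i) : x = 0 := by
  refine (mem_bot k).mp (mem_of_mem_sup_span_of_homogeneous bot_le (fun y hy => ?_) hx
    (by rwa [bot_sup_eq]))
  rcases hy with rfl | hy
  · exact ⟨0, hi.ne', hone⟩
  · obtain ⟨j, hj, hyj⟩ := exists_one_le_mem_of_mem_truncationGenerators hS hy
    exact ⟨j, by omega, hyj⟩

theorem mem_span_singleton_of_mem_truncation_of_mem_zero (hone : one ∈ G 0) (hS : S ≤ G 1)
    {x : V} (hxB : x ∈ truncation G one S) (hx : x ∈ G 0) : x ∈ span k {one} := by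
  refine mem_of_mem_sup_span_of_homogeneous ((span_singleton_le_iff_mem _ _).mpr hone)
    (fun y hy => ?_) hx (by rwa [← span_insert])
  obtain ⟨j, hj, hyj⟩ := exists_one_le_mem_of_mem_truncationGenerators hS hy
  exact ⟨j, by omega, hyj⟩

theorem mem_of_mem_truncation_of_mem_one (hone : one ∈ G 0) (hS : S ≤ G 1)
    {x : V} (hxB : x ∈ truncation G one S) (hx : x ∈ G 1) : x ∈ S := by
  have hB : truncation G one S = S ⊔ span k (insert one {x | ∃ i, 2 ≤ i ∧ x ∈ G i}) := by
    rw [truncation, truncationGenerators, ← Set.union_insert, span_union, span_eq]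
  refine mem_of_mem_sup_span_of_homogeneous hS (fun y hy => ?_) hx (hB ▸ hxB)
  rcases hy with rfl | ⟨j, hj, hyj⟩
  · exact ⟨0, by norm_num, hone⟩
  · exact ⟨j, by omega, hyj⟩

end Truncation

section Closure

variable {A : Alg k V} {S : Submodule k V}

theorem m_mem_truncationIdeal_of_forall_mem_generators (hS : S ≤ A.grading 1) {n : ℕ}
    {b : Fin n → V} (hb : ∀ i, b i ∈ truncationGenerators A.grading S) :
    A.m n b ∈ truncationIdeal A.grading S := by
  choose d hd hbd using fun i => exists_one_le_mem_of_mem_truncationGenerators hS (hb i)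
  obtain ⟨j, hj, hm⟩ := A.exists_two_le_m_mem_grading hbd hd
  exact subset_span (Or.inr ⟨j, hj, hm⟩)

theorem m_mem_truncationIdeal (hS : S ≤ A.grading 1) (n : ℕ) (a : Fin n → V)
    (ha : ∀ i, a i ∈ truncationIdeal A.grading S) : A.m n a ∈ truncationIdeal A.grading S :=
  (A.m n).map_mem_of_forall_mem_span
    (fun _ hb => m_mem_truncationIdeal_of_forall_mem_generators hS hb) a ha

theorem m_mem_truncation {one : V} (hone : IsStrictUnit A one) (hS : S ≤ A.grading 1) (n : ℕ)
    (a : Fin n → V) (ha : ∀ i, a i ∈ truncation A.grading one S) :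
    A.m n a ∈ truncation A.grading one S := by
  refine (A.m n).map_mem_of_forall_mem_span (fun b hb => ?_) a ha
  by_cases hone_mem : ∃ j, b j = one
  · obtain ⟨j, hj⟩ := hone_mem
    exact hone.m_mem (fun i => subset_span (hb i)) hj
  · exact truncationIdeal_le_truncation (m_mem_truncationIdeal_of_forall_mem_generators hS
      fun i => (hb i).resolve_left fun hi => hone_mem ⟨i, hi⟩)

end Closure

section Homology

variable {A : Alg k V} {one : V} {S : Submodule k V}

theorem exists_mem_truncation_homologous (hone : IsStrictUnit A one)
    (hneg : ∀ i : ℤ, i < 0 → ∀ x ∈ A.grading i, A.d x = 0 →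
      ∃ z ∈ A.grading (i - 1), x = A.d z)
    (hzero : ∀ x ∈ A.grading 0, A.d x = 0 →
      ∃ c : k, ∃ z ∈ A.grading (-1), x - c • one = A.d z)
    (hSsup : (A.grading 0).map A.dLinear ⊔ S = A.grading 1)
    {i : ℤ} {y : V} (hy : y ∈ A.grading i) (hyd : A.d y = 0) :
    ∃ x ∈ truncation A.grading one S, A.d x = 0 ∧ ∃ z, x - y = A.d z := by
  simp only [← A.dLinear_apply] at hneg hzero hyd ⊢
  obtain hi | rfl | rfl | hi : i < 0 ∨ i = 0 ∨ i = 1 ∨ 2 ≤ i := by omega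
  · obtain ⟨z, -, rfl⟩ := hneg i hi y hy hyd
    exact ⟨0, zero_mem _, map_zero _, -z, by simp⟩
  · obtain ⟨c, z, -, hz⟩ := hzero y hy hyd
    refine ⟨c • one, smul_mem _ c one_mem_truncation, ?_, -z, ?_⟩
    · rw [map_smul, A.dLinear_apply, hone.cycle, smul_zero]
    · rw [map_neg, ← hz, neg_sub]
  · obtain ⟨_, ⟨w, hw, rfl⟩, s, hs, rfl⟩ := mem_sup.mp (hSsup ▸ hy)
    refine ⟨s, mem_truncation_of_mem hs, ?_, -w, by simp⟩
    rwa [map_add, A.dLinear_apply (A.dLinear w), A.dLinear_apply w,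
      A.d_d_of_mem_grading hw, zero_add] at hyd
  · exact ⟨y, mem_truncation_of_two_le hi hy, hyd, 0, by simp⟩

theorem exists_mem_truncation_primitive (hone : IsStrictUnit A one)
    (hone_ne : ¬ ∃ z : V, one = A.d z)
    (hSdisj : Disjoint ((A.grading 0).map A.dLinear) S)
    (hSsup : (A.grading 0).map A.dLinear ⊔ S = A.grading 1)
    {i : ℤ} {x : V} (hxB : x ∈ truncation A.grading one S) (hx : x ∈ A.grading i)
    {z : V} (hz : z ∈ A.grading (i - 1)) (hxz : x = A.d z) :
    ∃ w ∈ truncation A.grading one S, x = A.d w := by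
  have hS : S ≤ A.grading 1 := hSsup ▸ le_sup_right
  simp only [← A.dLinear_apply] at hone_ne hxz ⊢
  obtain hi | rfl | rfl | rfl | hi : i < 0 ∨ i = 0 ∨ i = 1 ∨ i = 2 ∨ 3 ≤ i := by omega
  · refine ⟨0, zero_mem _, ?_⟩
    rw [eq_zero_of_mem_truncation_of_neg hone.mem hS hi hxB hx, map_zero]
  · obtain ⟨c, rfl⟩ := mem_span_singleton.mp
      (mem_span_singleton_of_mem_truncation_of_mem_zero hone.mem hS hxB hx)
    rcases eq_or_ne c 0 with rfl | hc
    · exact ⟨0, zero_mem _, by simp⟩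
    · refine (hone_ne ⟨c⁻¹ • z, ?_⟩).elim
      rw [map_smul, ← hxz, smul_smul, inv_mul_cancel₀ hc, one_smul]
  · refine ⟨0, zero_mem _, ?_⟩
    rw [disjoint_def.mp hSdisj x ⟨z, hz, hxz.symm⟩
      (mem_of_mem_truncation_of_mem_one hone.mem hS hxB hx), map_zero]
  · obtain ⟨_, ⟨u, hu, rfl⟩, s, hs, rfl⟩ := mem_sup.mp (hSsup ▸ hz)
    refine ⟨s, mem_truncation_of_mem hs, ?_⟩
    rw [hxz, map_add, A.dLinear_apply (A.dLinear u), A.dLinear_apply u,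
      A.d_d_of_mem_grading hu, zero_add]
  · exact ⟨z, mem_truncation_of_two_le (by omega) hz, hxz⟩

end Homology

end AInfty

/-- **Existence of an augmented quasi-isomorphic subalgebra.**
Let `A` be a strictly unital A∞-algebra over a field `k` (for example a unital
dg algebra) such that `Hⁱ A = 0` for `i < 0` and `H⁰ A = k` (spanned by the
class of the unit).  Then there is a subalgebra `B ⊆ A` (a graded subspace
closed under all the operations `m_i`) whose inclusion is a quasi-isomorphism
and which is augmented: `B = k·1_A ⊕ K` for a graded subspace `K` closed under
all the operations (the kernel of the strict augmentation `ε : B → k`). -/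
theorem augmented_quasiIsomorphic_subalgebra
    (k V : Type) [Field k] [AddCommGroup V] [Module k V] (A : Alg k V)
    (one : V) (hone : IsStrictUnit A one)
    -- Hⁱ A = 0 for i < 0 :
    (hneg : ∀ i : ℤ, i < 0 → ∀ x ∈ A.grading i, A.d x = 0 →
      ∃ z ∈ A.grading (i - 1), x = A.d z)
    -- H⁰ A = k, spanned by the class of the unit …
    (hzero : ∀ x ∈ A.grading 0, A.d x = 0 →
      ∃ c : k, ∃ z ∈ A.grading (-1), x - c • one = A.d z)
    -- … which is non-zero :
    (hone_ne : ¬ ∃ z : V, one = A.d z) :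
    ∃ B : Submodule k V,
      -- B is a graded subspace containing the unit …
      one ∈ B ∧
      (∀ x ∈ B, ∀ i : ℤ, ((A.decomp.decompose' x) i : V) ∈ B) ∧
      -- … closed under all the operations m_i (a subalgebra) :
      (∀ (n : ℕ) (a : Fin n → V), (∀ i, a i ∈ B) → A.m n a ∈ B) ∧
      -- the inclusion B → A is a quasi-isomorphism :
      (∀ y : V, A.d y = 0 → ∃ x ∈ B, A.d x = 0 ∧ ∃ z : V, x - y = A.d z) ∧
      (∀ x ∈ B, A.d x = 0 → (∃ z : V, x = A.d z) → ∃ w ∈ B, x = A.d w) ∧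
      -- and B is augmented: B = k·1_A ⊕ K with K = ker ε a graded subspace
      -- closed under the operations :
      (∃ K : Submodule k V, K ≤ B ∧
        (∀ x ∈ K, ∀ i : ℤ, ((A.decomp.decompose' x) i : V) ∈ K) ∧
        (∀ (n : ℕ) (a : Fin n → V), (∀ i, a i ∈ K) → A.m n a ∈ K) ∧
        Disjoint (Submodule.span k {one}) K ∧
        Submodule.span k {one} ⊔ K = B) := by
  have hD : ∀ i, ∀ x ∈ A.grading i, A.dLinear x ∈ A.grading (i + 1) :=
    fun _ _ hx => A.d_mem_grading hx
  have hd0 : (A.grading 0).map A.dLinear ≤ A.grading 1 :=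
    map_le_iff_le_comap.mpr fun x hx => hD 0 x hx
  obtain ⟨S, hSdisj, hSsup⟩ := IsModularLattice.exists_disjoint_and_sup_eq hd0
  have hS : S ≤ A.grading 1 := hSsup ▸ le_sup_right
  have hB := isHomogeneous_truncation hone.mem hS
  refine ⟨truncation A.grading one S, one_mem_truncation, fun x hx i => hB i hx,
    m_mem_truncation hone hS, fun y hy => ?_, fun x hx _ ⟨z, hxz⟩ => ?_,
    truncationIdeal A.grading S, truncationIdeal_le_truncation,
    fun x hx i => isHomogeneous_truncationIdeal hS i hx, m_mem_truncationIdeal hS,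
    disjoint_span_singleton_truncationIdeal hone.mem hS, span_singleton_sup_truncationIdeal⟩
  · exact exists_homologous_of_forall_homogeneous A.dLinear hD
      (fun _ _ hy hyd => exists_mem_truncation_homologous hone hneg hzero hSsup hy hyd) hy
  · exact exists_primitive_of_forall_homogeneous A.dLinear hD hB
      (fun _ _ hxB hx _ hz hxz =>
        exists_mem_truncation_primitive hone hone_ne hSdisj hSsup hxB hx hz hxz) hx hxz
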